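/- The one-sided limit lim_{r→0⁺} (1/r) · ∫_{(0,1)²} 1_{{|y(x)| < r}} ( |∂₁y(x)| + |∂₂y(x)| ) dx exists and equals 4. -/

import Mathlib

/-!
On the open square `|y| = sin πa · sin πb`, and the integrand is `1_{|y|<r} |∂₂y|` plus its mirror
image under swapping the coordinates. Integrating first in the variable that carries the cosine and
substituting `u = sin πt` on each half of `(0,1)` turns the inner integral into `2 min (sin πa, r)`.
Hence the integral equals `4 ∫₀¹ min (sin πa, r) da`, and `1/r` times it is
`4 ∫₀¹ min (sin πa / r, 1) da`, which tends to `4` by dominated convergence.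
-/

open Real MeasureTheory Filter Set

/-- `y(x₁,x₂) = sin(π x₁) sin(π x₂)`. -/
noncomputable def ybar (x : ℝ × ℝ) : ℝ := Real.sin (π * x.1) * Real.sin (π * x.2)

/-- `∂₁ y (x₁,x₂) = π cos(π x₁) sin(π x₂)`. -/
noncomputable def d1y (x : ℝ × ℝ) : ℝ := π * Real.cos (π * x.1) * Real.sin (π * x.2)

/-- `∂₂ y (x₁,x₂) = π sin(π x₁) cos(π x₂)`. -/
noncomputable def d2y (x : ℝ × ℝ) : ℝ := π * Real.sin (π * x.1) * Real.cos (π * x.2)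

open Topology

lemma sin_pi_mul_pos {a : ℝ} (ha : a ∈ Ioo (0:ℝ) 1) : 0 < sin (π * a) :=
  sin_pos_of_pos_of_lt_pi (mul_pos pi_pos ha.1) (mul_lt_of_lt_one_right pi_pos ha.2)

open intervalIntegral in
lemma integral_comp_sin_mul_abs_cos {g : ℝ → ℝ} (hg : IntervalIntegrable g volume 0 1) :
    ∫ t in (0:ℝ)..1, g (sin (π * t)) * (π * |cos (π * t)|) = 2 * ∫ u in (0:ℝ)..1, g u := by
  set h : ℝ → ℝ := fun t ↦ g (sin (π * t)) * (π * |cos (π * t)|) with h_def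
  have h_symm (t : ℝ) : h (1 - t) = h t := by
    simp only [h_def, mul_one_sub, sin_pi_sub, cos_pi_sub, abs_neg]
  have hsin_cont : ContinuousOn (fun t ↦ sin (π * t)) (uIcc 0 (1 / 2)) := by fun_prop
  have hsin_deriv : ∀ t ∈ Ioo (min 0 (1 / 2)) (max 0 (1 / 2)),
      HasDerivAt (fun t ↦ sin (π * t)) (π * |cos (π * t)|) t := by
    intro t ht
    rw [min_eq_left (by norm_num), max_eq_right (by norm_num)] at ht
    have hcos : 0 ≤ cos (π * t) :=
      cos_nonneg_of_mem_Icc ⟨by nlinarith [pi_pos, ht.1], by nlinarith [pi_pos, ht.2]⟩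
    rw [abs_of_nonneg hcos, mul_comm π]
    exact ((hasDerivAt_id t).const_mul π).sin.congr_deriv (by simp [mul_comm])
  have hderiv_nonneg : ∀ t ∈ Ioo (min 0 (1 / 2)) (max 0 (1 / 2)), 0 ≤ π * |cos (π * t)| :=
    fun t _ ↦ by positivity
  have hsin_ends : sin (π * 0) = 0 ∧ sin (π * (1 / 2)) = 1 :=
    ⟨by rw [mul_zero, sin_zero], by rw [mul_one_div, sin_pi_div_two]⟩
  have h_left : ∫ t in (0:ℝ)..1 / 2, h t = ∫ u in (0:ℝ)..1, g u := by
    have := integral_comp_mul_deriv_of_deriv_nonneg (g := g) hsin_cont hsin_deriv hderiv_nonneg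
    rwa [hsin_ends.1, hsin_ends.2] at this
  have h_right : ∫ t in (1 / 2 : ℝ)..1, h t = ∫ t in (0:ℝ)..1 / 2, h t := by
    have := integral_comp_sub_left h (a := 0) (b := 1 / 2) 1
    norm_num [h_symm] at this
    norm_num [this]
  have hint_left : IntervalIntegrable h volume 0 (1 / 2) := by
    refine (integrable_comp_mul_deriv_iff_of_deriv_nonneg hsin_cont hsin_deriv hderiv_nonneg).2 ?_
    rwa [hsin_ends.1, hsin_ends.2]
  have hint_right : IntervalIntegrable h volume (1 / 2) 1 := by
    have := hint_left.comp_sub_left 1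
    norm_num [h_symm] at this
    exact this.symm
  rw [← integral_add_adjacent_intervals hint_left hint_right, h_right, h_left]
  ring

lemma ite_mul_lt_eq_indicator {s : ℝ} (hs : 0 < s) (r : ℝ) :
    (fun u : ℝ ↦ if s * u < r then s else 0) = (Iio (r / s)).indicator (fun _ ↦ s) := by
  ext u
  simp only [indicator_apply, mem_Iio, lt_div_iff₀ hs, mul_comm u]

lemma integral_Ioo_ite_mul_lt {s r : ℝ} (hs : 0 < s) (hr : 0 < r) :
    ∫ u in Ioo (0:ℝ) 1, (if s * u < r then s else 0) = min s r := by
  rw [ite_mul_lt_eq_indicator hs, integral_indicator_const _ measurableSet_Iio,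
    measureReal_restrict_apply measurableSet_Iio, Iio_inter_Ioo,
    Real.volume_real_Ioo_of_le (by positivity), smul_eq_mul, sub_zero, min_mul_of_nonneg _ _ hs.le,
    div_mul_cancel₀ _ hs.ne', one_mul, min_comm]

lemma integral_Ioo_ite_mul_sin_lt {s r : ℝ} (hs : 0 < s) (hr : 0 < r) :
    ∫ t in Ioo (0:ℝ) 1, (if s * sin (π * t) < r then s * (π * |cos (π * t)|) else 0)
      = 2 * min s r := by
  have hg : IntervalIntegrable (fun u : ℝ ↦ if s * u < r then s else 0) volume 0 1 := by
    rw [ite_mul_lt_eq_indicator hs, intervalIntegrable_iff]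
    exact (integrableOn_const (by simp)).indicator measurableSet_Iio
  have := integral_comp_sin_mul_abs_cos hg
  simp only [ite_mul, zero_mul, intervalIntegral.integral_of_le zero_le_one,
    integral_Ioc_eq_integral_Ioo] at this
  rw [this, integral_Ioo_ite_mul_lt hs hr]

noncomputable def stripAbsD2y (r : ℝ) (z : ℝ × ℝ) : ℝ :=
  if sin (π * z.1) * sin (π * z.2) < r then sin (π * z.1) * (π * |cos (π * z.2)|) else 0

lemma abs_stripAbsD2y_le (r : ℝ) (z : ℝ × ℝ) : |stripAbsD2y r z| ≤ π := by
  unfold stripAbsD2y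
  split_ifs
  · rw [abs_mul, abs_mul, abs_abs, abs_of_pos pi_pos, mul_left_comm]
    exact mul_le_of_le_one_right pi_pos.le
      (mul_le_one₀ (abs_sin_le_one _) (abs_nonneg _) (abs_cos_le_one _))
  · simpa using pi_pos.le

lemma integrableOn_stripAbsD2y (r : ℝ) :
    IntegrableOn (stripAbsD2y r) (Ioo (0:ℝ) 1 ×ˢ Ioo (0:ℝ) 1) := by
  have hmeas : Measurable (stripAbsD2y r) :=
    Measurable.ite (measurableSet_lt (by fun_prop) measurable_const) (by fun_prop) measurable_const
  refine IntegrableOn.of_bound ?_ hmeas.aestronglyMeasurable π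
    (ae_of_all _ (abs_stripAbsD2y_le r))
  rw [Measure.volume_eq_prod, Measure.prod_prod, Real.volume_Ioo]
  simp

lemma setIntegral_stripAbsD2y {r : ℝ} (hr : 0 < r) :
    ∫ z in Ioo (0:ℝ) 1 ×ˢ Ioo (0:ℝ) 1, stripAbsD2y r z
      = 2 * ∫ a in Ioo (0:ℝ) 1, min (sin (π * a)) r := by
  have hfubini := integrableOn_stripAbsD2y r
  rw [Measure.volume_eq_prod] at hfubini ⊢
  rw [setIntegral_prod _ hfubini, ← integral_const_mul]
  refine setIntegral_congr_fun measurableSet_Ioo fun a ha ↦ ?_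
  exact integral_Ioo_ite_mul_sin_lt (sin_pi_mul_pos ha) hr

lemma ite_abs_ybar_lt_eq_stripAbsD2y {r : ℝ} {x : ℝ × ℝ} (hx : x ∈ Ioo (0:ℝ) 1 ×ˢ Ioo (0:ℝ) 1) :
    (if |ybar x| < r then |d1y x| + |d2y x| else 0)
      = stripAbsD2y r x.swap + stripAbsD2y r x := by
  have h1 := sin_pi_mul_pos hx.1
  have h2 := sin_pi_mul_pos hx.2
  have hy : |ybar x| = sin (π * x.1) * sin (π * x.2) := by
    rw [ybar, abs_mul, abs_of_pos h1, abs_of_pos h2]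
  have hd1 : |d1y x| = sin (π * x.2) * (π * |cos (π * x.1)|) := by
    rw [d1y, abs_mul, abs_mul, abs_of_pos pi_pos, abs_of_pos h2]; ring
  have hd2 : |d2y x| = sin (π * x.1) * (π * |cos (π * x.2)|) := by
    rw [d2y, abs_mul, abs_mul, abs_of_pos pi_pos, abs_of_pos h1]; ring
  simp only [stripAbsD2y, Prod.fst_swap, Prod.snd_swap, mul_comm (sin (π * x.2)) (sin (π * x.1)),
    hy, hd1, hd2]
  split_ifs <;> simp

lemma setIntegral_ite_abs_ybar_lt {r : ℝ} (hr : 0 < r) :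
    ∫ x in Ioo (0:ℝ) 1 ×ˢ Ioo (0:ℝ) 1, (if |ybar x| < r then |d1y x| + |d2y x| else 0)
      = 4 * ∫ a in Ioo (0:ℝ) 1, min (sin (π * a)) r := by
  have hS : MeasurableSet (Ioo (0:ℝ) 1 ×ˢ Ioo (0:ℝ) 1) := measurableSet_Ioo.prod measurableSet_Ioo
  have hswap : ∫ z in Ioo (0:ℝ) 1 ×ˢ Ioo (0:ℝ) 1, stripAbsD2y r z.swap
      = ∫ z in Ioo (0:ℝ) 1 ×ˢ Ioo (0:ℝ) 1, stripAbsD2y r z := by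
    rw [Measure.volume_eq_prod]
    exact setIntegral_prod_swap _ _ _
  have hint := integrableOn_stripAbsD2y r
  have hint_swap : IntegrableOn (fun z ↦ stripAbsD2y r z.swap) (Ioo (0:ℝ) 1 ×ˢ Ioo (0:ℝ) 1) := by
    rw [IntegrableOn, Measure.volume_eq_prod, ← Measure.prod_restrict] at hint ⊢
    exact hint.swap
  rw [setIntegral_congr_fun hS fun x hx ↦ ite_abs_ybar_lt_eq_stripAbsD2y hx,
    integral_add hint_swap hint, hswap, setIntegral_stripAbsD2y hr]
  ring

lemma tendsto_inv_mul_integral_min_nhdsGT_zero {α : Type*} [MeasurableSpace α] {μ : Measure α}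
    [IsFiniteMeasure μ] {f : α → ℝ} (hf : AEMeasurable f μ) (hpos : ∀ᵐ x ∂μ, 0 < f x) :
    Tendsto (fun r ↦ r⁻¹ * ∫ x, min (f x) r ∂μ) (𝓝[>] 0) (𝓝 (μ.real univ)) := by
  have hmin : ∀ r : ℝ, 0 < r → r⁻¹ * ∫ x, min (f x) r ∂μ = ∫ x, min (f x / r) 1 ∂μ := by
    intro r hr
    rw [← integral_const_mul]
    congr 1 with x
    rw [mul_min_of_nonneg _ _ (inv_nonneg.2 hr.le), inv_mul_cancel₀ hr.ne', inv_mul_eq_div]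
  have hlim : Tendsto (fun r ↦ ∫ x, min (f x / r) 1 ∂μ) (𝓝[>] 0) (𝓝 (∫ _, (1:ℝ) ∂μ)) := by
    refine tendsto_integral_filter_of_dominated_convergence (fun _ ↦ 1) ?_ ?_ ?_ ?_
    · exact .of_forall fun r ↦ ((hf.div_const r).min aemeasurable_const).aestronglyMeasurable
    · filter_upwards [self_mem_nhdsWithin] with r hr
      filter_upwards [hpos] with x hx
      rw [Real.norm_of_nonneg (le_min (div_pos hx hr).le zero_le_one)]
      exact min_le_right _ _
    · exact integrable_const 1
    · filter_upwards [hpos] with x hx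
      refine tendsto_const_nhds.congr' ?_
      filter_upwards [Ioo_mem_nhdsGT hx] with r hr
      rw [min_eq_right ((one_le_div hr.1).2 hr.2.le)]
  rw [integral_const, smul_eq_mul, mul_one] at hlim
  refine hlim.congr' ?_
  filter_upwards [self_mem_nhdsWithin] with r hr using (hmin r hr).symm

/-- The one-sided limit
`lim_{r→0⁺} (1/r) ∫_{(0,1)²} 1_{|y|<r} (|∂₁y| + |∂₂y|) dx` exists and equals `4`. -/
theorem stmt4 :
    Filter.Tendsto
      (fun r : ℝ => (1 / r) *
        ∫ x in Set.Ioo (0:ℝ) 1 ×ˢ Set.Ioo (0:ℝ) 1,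
          (if |ybar x| < r then |d1y x| + |d2y x| else 0))
      (nhdsWithin (0:ℝ) (Set.Ioi 0)) (nhds 4) := by
  have hpos : ∀ᵐ a ∂volume.restrict (Ioo (0:ℝ) 1), 0 < sin (π * a) :=
    ae_restrict_of_forall_mem measurableSet_Ioo fun a ha ↦ sin_pi_mul_pos ha
  have hlim := (tendsto_inv_mul_integral_min_nhdsGT_zero (by fun_prop) hpos).const_mul 4
  rw [measureReal_restrict_apply_univ, Real.volume_real_Ioo_of_le zero_le_one, sub_zero,
    mul_one] at hlim
  refine hlim.congr' ?_
  filter_upwards [self_mem_nhdsWithin] with r hr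
  rw [setIntegral_ite_abs_ybar_lt hr, one_div, mul_left_comm]
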